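/- arXiv:1704.03438 — 6 statements merged into one kernel-verified Lean document; each statement's English description precedes it below -/
import Mathlib

section
/- Let X be a compact space and let G be a uniformly bounded subset of C(X). If the closure of G in ℝ^X has countable tightness, then the closure of G in ℝ^X is contained in B₁(X). -/
open Filter Topology Set

/-- A topological space `Y` has countable tightness if for every subset `A` of `Y` and every
point `y` in the closure of `A` there is a countable subset `B` of `A` with `y ∈ closure B`. -/
def CountableTightness (Y : Type*) [TopologicalSpace Y] : Prop :=
  ∀ (A : Set Y) (y : Y), y ∈ closure A → ∃ B ⊆ A, B.Countable ∧ y ∈ closure B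

/-- `f : X → M` is of Baire class 1 if it is the pointwise limit of a sequence of
continuous functions. -/
def BaireClassOne {X M : Type*} [TopologicalSpace X] [TopologicalSpace M] (f : X → M) : Prop :=
  ∃ g : ℕ → X → M, (∀ n, Continuous (g n)) ∧ ∀ x, Tendsto (fun n => g n x) atTop (𝓝 (f x))


/-!
Countable tightness puts `f` in the closure of a countable `F ⊆ G`. Passing to the coarser topology
induced by `F`, we may assume `X` compact and metrizable, where Baire's criterion applies: a
bounded `f` is of Baire class one unless, for some `p < q`, both `{f ≤ p}` and `{q ≤ f}` are dense
in a nonempty closed set `L` (otherwise its sublevel sets are Fσ and `f` is a uniform limit of step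
functions on ambiguous sets). Such an `L` lets a Cantor scheme extract from `F` an independent
sequence `h`: for some `p' < q'`, every `M ⊆ ℕ` is realised at a point where `h i ≤ p'` for
`i ∈ M` and `q' ≤ h i` for `i ∉ M`. Along an uncountable independent family `(E r)` of subsets of
`ℕ`, compactness of `closure G` yields a `y ∈ closure G` with `y ≤ p'` at every witness `z r` of
`E r` which is a limit of functions `w ∈ closure G` satisfying `q' ≤ w (z r)` for all but finitely
many `r`. Countably many such `w` all satisfy `q' ≤ w (z r)` for some common `r`, so `y` is not in
the closure of a countable set of them, contradicting countable tightness.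
-/

section BaireClassOne

variable {Y : Type*} [TopologicalSpace Y]

omit [TopologicalSpace Y] in
theorem BaireClassOne.of_le {t₁ t₂ : TopologicalSpace Y} (h : t₁ ≤ t₂) {f : Y → ℝ}
    (hf : @BaireClassOne Y ℝ t₂ _ f) : @BaireClassOne Y ℝ t₁ _ f := by
  obtain ⟨g, hg, hgf⟩ := hf
  exact ⟨g, fun n => continuous_le_dom h (hg n), hgf⟩

theorem BaireClassOne.add {f g : Y → ℝ} (hf : BaireClassOne f) (hg : BaireClassOne g) :
    BaireClassOne (f + g) := by
  obtain ⟨u, hu, hul⟩ := hf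
  obtain ⟨v, hv, hvl⟩ := hg
  exact ⟨u + v, fun n => (hu n).add (hv n), fun y => (hul y).add (hvl y)⟩

theorem BaireClassOne.sub {f g : Y → ℝ} (hf : BaireClassOne f) (hg : BaireClassOne g) :
    BaireClassOne (f - g) := by
  obtain ⟨u, hu, hul⟩ := hf
  obtain ⟨v, hv, hvl⟩ := hg
  exact ⟨u - v, fun n => (hu n).sub (hv n), fun y => (hul y).sub (hvl y)⟩

theorem BaireClassOne.const_mul (c : ℝ) {f : Y → ℝ} (hf : BaireClassOne f) :
    BaireClassOne fun y => c * f y := by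
  obtain ⟨u, hu, hul⟩ := hf
  exact ⟨fun n y => c * u n y, fun n => continuous_const.mul (hu n),
    fun y => (hul y).const_mul c⟩

theorem baireClassOne_finsetSum {ι : Type*} (s : Finset ι) {F : ι → Y → ℝ}
    (hF : ∀ i, BaireClassOne (F i)) : BaireClassOne fun y => ∑ i ∈ s, F i y := by
  choose u hu hul using hF
  exact ⟨fun n y => ∑ i ∈ s, u i n y, fun n => continuous_finsetSum s fun i _ => hu i n,
    fun y => tendsto_finsetSum s fun i _ => hul i y⟩

theorem BaireClassOne.exists_abs_le {f : Y → ℝ} (hf : BaireClassOne f) {M : ℝ}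
    (hM : ∀ y, |f y| ≤ M) :
    ∃ u : ℕ → Y → ℝ, (∀ n, Continuous (u n)) ∧ (∀ n y, |u n y| ≤ M) ∧
      ∀ y, Tendsto (fun n => u n y) atTop (𝓝 (f y)) := by
  obtain ⟨u, hu, hul⟩ := hf
  have hclamp : Continuous fun t : ℝ => max (-M) (min M t) := by fun_prop
  refine ⟨fun n y => max (-M) (min M (u n y)), fun n => hclamp.comp (hu n), fun n y => ?_,
    fun y => ?_⟩
  · have hM0 : 0 ≤ M := (abs_nonneg _).trans (hM y)
    exact abs_le.2 ⟨le_max_left _ _, max_le (by linarith) (min_le_left _ _)⟩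
  · have hfy := abs_le.1 (hM y)
    have := (hclamp.tendsto (f y)).comp (hul y)
    rwa [min_eq_right hfy.2, max_eq_right hfy.1] at this

theorem baireClassOne_tsum {d : ℕ → Y → ℝ} (hd : ∀ j, BaireClassOne (d j)) {M : ℕ → ℝ}
    (hM : Summable M) (hdM : ∀ j y, |d j y| ≤ M j) :
    BaireClassOne fun y => ∑' j, d j y := by
  choose u hu huM hul using fun j => (hd j).exists_abs_le (hdM j)
  refine ⟨fun n y => ∑ j ∈ Finset.range n, u j n y,
    fun n => continuous_finsetSum _ fun j _ => hu j n, fun y => ?_⟩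
  have hlim := tendsto_tsum_of_dominated_convergence (𝓕 := atTop)
    (f := fun n j => if j < n then u j n y else 0) (g := fun j => d j y) hM
    (fun j => (hul j y).congr' ((eventually_gt_atTop j).mono fun n hn => (if_pos hn).symm))
    (Eventually.of_forall fun n j => by
      split_ifs
      · exact huM j n y
      · simpa using (abs_nonneg _).trans (hdM j y))
  refine hlim.congr fun n => ?_
  rw [tsum_eq_sum (s := Finset.range n) fun j hj => if_neg (by simpa using hj)]
  exact Finset.sum_congr rfl fun j hj => if_pos (Finset.mem_range.1 hj)

theorem baireClassOne_of_forall_abs_sub_le {f : Y → ℝ}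
    (h : ∀ ε > 0, ∃ g, BaireClassOne g ∧ ∀ y, |f y - g y| ≤ ε) : BaireClassOne f := by
  choose t ht htf using fun j : ℕ => h ((1 / 2) ^ j) (by positivity)
  have hdiff : ∀ j y, |(t (j + 1) - t j) y| ≤ 2 * (1 / 2) ^ j := fun j y => by
    have h1 := htf (j + 1) y
    have h2 := htf j y
    rw [pow_succ] at h1
    calc |(t (j + 1) - t j) y| = |(f y - t j y) - (f y - t (j + 1) y)| := by simp
      _ ≤ |f y - t j y| + |f y - t (j + 1) y| := abs_sub _ _
      _ ≤ 2 * (1 / 2) ^ j := by linarith [pow_nonneg (by norm_num : (0 : ℝ) ≤ 1 / 2) j]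
  have htel : ∀ y, HasSum (fun j => (t (j + 1) - t j) y) (f y - t 0 y) := fun y => by
    have hsum : Summable fun j => (t (j + 1) - t j) y :=
      .of_norm_bounded (summable_geometric_two.mul_left 2) (hdiff · y)
    refine hsum.hasSum_iff_tendsto_nat.2 ?_
    simp only [Pi.sub_apply, Finset.sum_range_sub (fun j => t j y)]
    refine Tendsto.sub ?_ tendsto_const_nhds
    refine tendsto_iff_dist_tendsto_zero.2 (squeeze_zero (fun _ => dist_nonneg) (fun n => ?_)
      (tendsto_pow_atTop_nhds_zero_of_lt_one (by norm_num) (by norm_num : (1 / 2 : ℝ) < 1)))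
    rw [Real.dist_eq, abs_sub_comm]
    exact htf n y
  convert (ht 0).add (baireClassOne_tsum (fun j => (ht (j + 1)).sub (ht j))
    (summable_geometric_two.mul_left 2) hdiff) using 1
  ext y
  rw [Pi.add_apply, (htel y).tsum_eq, add_sub_cancel]

end BaireClassOne

theorem mem_Icc_ceil_of_mem_Ioo {i : ℤ} {t C ε : ℝ} (hε : 0 < ε) (htC : |t| ≤ C)
    (ht : t ∈ Ioo ((i - 1) * ε) ((i + 1) * ε)) : i ∈ Finset.Icc (-⌈C / ε⌉) ⌈C / ε⌉ := by
  have hN : C / ε ≤ ⌈C / ε⌉ := Int.le_ceil _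
  have htC' := abs_le.1 htC
  have h₁ : (i : ℝ) - 1 < ⌈C / ε⌉ := ((lt_div_iff₀ hε).2 (by linarith [ht.1])).trans_le hN
  have h₂ : -C / ε < i + 1 := (div_lt_iff₀ hε).2 (by linarith [ht.2])
  rw [neg_div] at h₂
  have h₁' : i - 1 < ⌈C / ε⌉ := by exact_mod_cast h₁
  have h₂' : -⌈C / ε⌉ < i + 1 := by exact_mod_cast (show (-⌈C / ε⌉ : ℝ) < i + 1 by linarith)
  exact Finset.mem_Icc.2 ⟨by omega, by omega⟩

section Fσ

variable {Y : Type*} [TopologicalSpace Y] {s t : Set Y}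

def IsFσ (s : Set Y) : Prop := IsGδ sᶜ

theorem IsClosed.isFσ (hs : IsClosed s) : IsFσ s := hs.isOpen_compl.isGδ

theorem IsOpen.isFσ [PerfectlyNormalSpace Y] (hs : IsOpen s) : IsFσ s := hs.isClosed_compl.isGδ

theorem IsFσ.iUnion {ι : Sort*} [Countable ι] {s : ι → Set Y} (hs : ∀ i, IsFσ (s i)) :
    IsFσ (⋃ i, s i) := by
  simpa only [IsFσ, compl_iUnion] using IsGδ.iInter hs

theorem IsFσ.union (hs : IsFσ s) (ht : IsFσ t) : IsFσ (s ∪ t) := by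
  simpa only [IsFσ, compl_union] using IsGδ.inter hs ht

theorem IsFσ.inter (hs : IsFσ s) (ht : IsFσ t) : IsFσ (s ∩ t) := by
  simpa only [IsFσ, compl_inter] using IsGδ.union hs ht

theorem IsFσ.exists_monotone_isClosed (hs : IsFσ s) :
    ∃ F : ℕ → Set Y, (∀ n, IsClosed (F n)) ∧ Monotone F ∧ s = ⋃ n, F n := by
  obtain ⟨U, hU, hsU⟩ := isGδ_iff_eq_iInter_nat.1 hs
  refine ⟨accumulate fun n => (U n)ᶜ, fun n => ?_, monotone_accumulate, ?_⟩
  · exact (finite_le_nat n).isClosed_biUnion fun k _ => (hU k).isClosed_compl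
  · rw [iUnion_accumulate, ← compl_iInter, ← hsU, compl_compl]

theorem baireClassOne_indicator_one [NormalSpace Y] (hs : IsFσ s) (hsc : IsFσ sᶜ) :
    BaireClassOne (s.indicator (1 : Y → ℝ)) := by
  obtain ⟨F, hF, hFm, rfl⟩ := hs.exists_monotone_isClosed
  obtain ⟨E, hE, hEm, hEF⟩ := hsc.exists_monotone_isClosed
  have hdisj : ∀ n, Disjoint (E n) (F n) := fun n =>
    disjoint_compl_left.mono (hEF ▸ subset_iUnion E n) (subset_iUnion F n)
  choose g hgE hgF _ using fun n => exists_continuous_zero_one_of_isClosed (hE n) (hF n) (hdisj n)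
  refine ⟨fun n => g n, fun n => (g n).continuous, fun y => ?_⟩
  by_cases hy : y ∈ ⋃ n, F n
  · obtain ⟨k, hk⟩ := mem_iUnion.1 hy
    exact tendsto_atTop_of_eventually_const (i₀ := k) fun n hn =>
      (hgF n (hFm hn hk)).trans (indicator_of_mem hy _).symm
  · obtain ⟨k, hk⟩ := mem_iUnion.1 (hEF ▸ hy : y ∈ ⋃ n, E n)
    exact tendsto_atTop_of_eventually_const (i₀ := k) fun n hn =>
      (hgE n (hEm hn hk)).trans (indicator_of_notMem hy _).symm

theorem exists_isFσ_partition [PerfectlyNormalSpace Y] {ι : Type*} [Countable ι]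
    {W : ι → Set Y} (hW : ∀ i, IsFσ (W i)) (hcov : ⋃ i, W i = univ) :
    ∃ A : ι → Set Y, (∀ i, IsFσ (A i)) ∧ Pairwise (fun i j => Disjoint (A i) (A j)) ∧
      (∀ i, A i ⊆ W i) ∧ ⋃ i, A i = univ := by
  rcases isEmpty_or_nonempty ι with hι | hι
  · exact ⟨W, isEmptyElim, isEmptyElim, fun _ => subset_rfl, hcov⟩
  choose F hF _ hWF using fun i => (hW i).exists_monotone_isClosed
  obtain ⟨e, he⟩ := exists_surjective_nat (ι × ℕ)
  set T : ℕ → Set Y := fun k => F (e k).1 (e k).2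
  refine ⟨fun i => ⋃ (k) (_ : (e k).1 = i), disjointed T k, fun i => ?_, fun i j hij => ?_,
    fun i => ?_, eq_univ_of_forall fun y => ?_⟩
  · refine IsFσ.iUnion fun k => IsFσ.iUnion fun _ => ?_
    rw [disjointed_eq_inter_compl]
    exact (hF _ _).isFσ.inter ((finite_lt_nat k).isOpen_biInter fun j _ =>
      (hF _ _).isOpen_compl).isFσ
  · simp only [disjoint_iUnion_left, disjoint_iUnion_right]
    rintro k rfl l rfl
    exact disjoint_disjointed _ fun hkl => hij (hkl ▸ rfl)
  · simp only [iUnion_subset_iff]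
    rintro k rfl
    exact (disjointed_subset _ k).trans (hWF _ ▸ subset_iUnion (F (e k).1) (e k).2)
  · obtain ⟨i, hi⟩ := mem_iUnion.1 (hcov ▸ mem_univ y)
    obtain ⟨n, hn⟩ := mem_iUnion.1 (hWF i ▸ hi)
    obtain ⟨k, hk⟩ := he (i, n)
    have hyT : y ∈ ⋃ k, T k := mem_iUnion.2 ⟨k, by simpa [T, hk] using hn⟩
    obtain ⟨l, hl⟩ := mem_iUnion.1 ((iUnion_disjointed (f := T)).symm ▸ hyT)
    exact mem_iUnion.2 ⟨(e l).1, mem_iUnion₂.2 ⟨l, rfl, hl⟩⟩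

theorem isFσ_compl_of_partition {ι : Type*} [Countable ι] {A : ι → Set Y}
    (hA : ∀ i, IsFσ (A i)) (hdisj : Pairwise fun i j => Disjoint (A i) (A j))
    (hcov : ⋃ i, A i = univ) (i : ι) : IsFσ (A i)ᶜ := by
  have hcompl : (A i)ᶜ = ⋃ (j) (_ : j ≠ i), A j := by
    ext y
    obtain ⟨j, hj⟩ := mem_iUnion.1 (hcov ▸ mem_univ y)
    simp only [mem_compl_iff, mem_iUnion]
    refine ⟨fun hy => ⟨j, fun hji => hy (hji ▸ hj), hj⟩, ?_⟩
    rintro ⟨j', hj'i, hy'⟩ hy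
    exact (hdisj hj'i).notMem_of_mem_left hy' hy
  rw [hcompl]
  exact IsFσ.iUnion fun j => IsFσ.iUnion fun _ => hA j

theorem exists_baireClassOne_abs_sub_le [PerfectlyNormalSpace Y] {f : Y → ℝ} {C : ℝ}
    (hC : ∀ y, |f y| ≤ C) (hf : ∀ a b, IsFσ (f ⁻¹' Ioo a b)) {ε : ℝ} (hε : 0 < ε) :
    ∃ g, BaireClassOne g ∧ ∀ y, |f y - g y| ≤ ε := by
  obtain ⟨A, hA, hdisj, hAW, hcov⟩ := exists_isFσ_partition (W := fun i : ℤ =>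
    f ⁻¹' Ioo ((i - 1) * ε) ((i + 1) * ε)) (fun i => hf _ _) <| eq_univ_of_forall fun y => by
      have hfy : f y = f y / ε * ε := (div_mul_cancel₀ _ hε.ne').symm
      refine mem_iUnion.2 ⟨⌊f y / ε⌋, ?_, ?_⟩
      · have := mul_lt_mul_of_pos_right (by linarith [Int.floor_le (f y / ε)] :
          (⌊f y / ε⌋ - 1 : ℝ) < f y / ε) hε
        linarith
      · have := mul_lt_mul_of_pos_right (Int.lt_floor_add_one (f y / ε)) hε
        linarith
  refine ⟨fun y => ∑ i ∈ Finset.Icc (-⌈C / ε⌉) ⌈C / ε⌉, (i * ε) * (A i).indicator 1 y,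
    baireClassOne_finsetSum _ fun i => (baireClassOne_indicator_one (hA i)
      (isFσ_compl_of_partition hA hdisj hcov i)).const_mul _, fun y => ?_⟩
  obtain ⟨i, hi⟩ := mem_iUnion.1 (hcov ▸ mem_univ y)
  have hfy := hAW i hi
  dsimp only
  rw [Finset.sum_eq_single_of_mem i (mem_Icc_ceil_of_mem_Ioo hε (hC y) hfy) fun j _ hji => ?_]
  · rw [indicator_of_mem hi, Pi.one_apply, mul_one, abs_le]
    constructor <;> linarith [hfy.1, hfy.2]
  · rw [indicator_of_notMem ((hdisj hji).notMem_of_mem_right hi), mul_zero]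

theorem baireClassOne_of_isFσ_preimage_Ioo [PerfectlyNormalSpace Y] {f : Y → ℝ} {C : ℝ}
    (hC : ∀ y, |f y| ≤ C) (hf : ∀ a b, IsFσ (f ⁻¹' Ioo a b)) : BaireClassOne f :=
  baireClassOne_of_forall_abs_sub_le fun _ hε => exists_baireClassOne_abs_sub_le hC hf hε

end Fσ

section BaireCriterion

variable {Y : Type*} [TopologicalSpace Y] {f : Y → ℝ}

theorem exists_isOpen_inter_subset_compl_of_not_subset_closure {L S : Set Y}
    (h : ¬ L ⊆ closure (L ∩ S)) :
    ∃ V, IsOpen V ∧ (V ∩ L).Nonempty ∧ V ∩ L ⊆ Sᶜ := by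
  obtain ⟨y, hyL, hy⟩ := not_subset.1 h
  exact ⟨(closure (L ∩ S))ᶜ, isClosed_closure.isOpen_compl, ⟨y, hy, hyL⟩,
    fun z ⟨hz, hzL⟩ hzS => hz (subset_closure ⟨hzL, hzS⟩)⟩

theorem exists_isFσ_sUnion_inter_subset [SecondCountableTopology Y] {𝒢 : Set (Set Y)} {P Q : Set Y}
    (h𝒢 : ∀ O ∈ 𝒢, IsOpen O ∧ ∃ A, IsFσ A ∧ O ∩ P ⊆ A ∧ A ⊆ Q) :
    ∃ A, IsFσ A ∧ ⋃₀ 𝒢 ∩ P ⊆ A ∧ A ⊆ Q := by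
  obtain ⟨T, hTc, hT𝒢, hTU⟩ := TopologicalSpace.isOpen_sUnion_countable 𝒢 fun O hO => (h𝒢 O hO).1
  choose! A hA hOA hAQ using fun O (hO : O ∈ T) => (h𝒢 O (hT𝒢 hO)).2
  refine ⟨⋃ O ∈ T, A O, ?_, ?_, iUnion₂_subset hAQ⟩
  · have := hTc.to_subtype
    rw [biUnion_eq_iUnion]
    exact IsFσ.iUnion fun O => hA O O.2
  · rintro y ⟨hyW, hy⟩
    obtain ⟨O, hOT, hyO⟩ := hTU ▸ hyW
    exact mem_biUnion hOT (hOA O hOT ⟨hyO, hy⟩)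

theorem exists_isFσ_separation [PerfectlyNormalSpace Y] [SecondCountableTopology Y] {p q : ℝ}
    (H : ∀ L : Set Y, IsClosed L → L.Nonempty →
      ¬ (L ⊆ closure (L ∩ {y | f y ≤ p}) ∧ L ⊆ closure (L ∩ {y | q ≤ f y}))) :
    ∃ A, IsFσ A ∧ {y | q ≤ f y} ⊆ A ∧ A ⊆ {y | p < f y} := by
  -- The union of all open sets on which such a separation exists is one of them, and `H` applied
  -- to its complement shows that it is everything.
  set 𝒢 : Set (Set Y) :=
    {O | IsOpen O ∧ ∃ A, IsFσ A ∧ O ∩ {y | q ≤ f y} ⊆ A ∧ A ⊆ {y | p < f y}}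
  have hWo : IsOpen (⋃₀ 𝒢) := isOpen_sUnion fun O hO => hO.1
  obtain ⟨A, hA, hqA, hAp⟩ := exists_isFσ_sUnion_inter_subset fun O (hO : O ∈ 𝒢) => hO
  suffices hWu : ⋃₀ 𝒢 = univ by
    exact ⟨A, hA, fun y hy => hqA ⟨hWu ▸ mem_univ y, hy⟩, hAp⟩
  by_contra hWne
  set L := (⋃₀ 𝒢)ᶜ
  have hL : IsClosed L := hWo.isClosed_compl
  obtain ⟨V, hVo, hVL, hV⟩ : ∃ V, IsOpen V ∧ (V ∩ L).Nonempty ∧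
      (V ∩ L ⊆ {y | p < f y} ∨ V ∩ L ⊆ {y | f y < q}) := by
    rcases not_and_or.1 (H L hL (nonempty_compl.2 hWne)) with h | h
    · obtain ⟨V, hVo, hVL, hV⟩ := exists_isOpen_inter_subset_compl_of_not_subset_closure h
      exact ⟨V, hVo, hVL, Or.inl fun y hy => not_le.1 (show ¬ f y ≤ p from hV hy)⟩
    · obtain ⟨V, hVo, hVL, hV⟩ := exists_isOpen_inter_subset_compl_of_not_subset_closure h
      exact ⟨V, hVo, hVL, Or.inr fun y hy => not_le.1 (show ¬ q ≤ f y from hV hy)⟩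
  have hWV : ⋃₀ 𝒢 ∪ V ∈ 𝒢 := by
    refine ⟨hWo.union hVo, ?_⟩
    rcases hV with hV | hV
    · refine ⟨A ∪ (V ∩ L), hA.union (hVo.isFσ.inter hL.isFσ), ?_, union_subset hAp hV⟩
      rintro y ⟨hy | hy, hyq⟩
      · exact Or.inl (hqA ⟨hy, hyq⟩)
      · by_cases hyW : y ∈ ⋃₀ 𝒢
        exacts [Or.inl (hqA ⟨hyW, hyq⟩), Or.inr ⟨hy, hyW⟩]
    · refine ⟨A, hA, ?_, hAp⟩
      rintro y ⟨hy | hy, hyq⟩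
      · exact hqA ⟨hy, hyq⟩
      · by_cases hyW : y ∈ ⋃₀ 𝒢
        exacts [hqA ⟨hyW, hyq⟩, absurd (show q ≤ f y from hyq) (not_le.2 (hV ⟨hy, hyW⟩))]
  obtain ⟨y, hyV, hyL⟩ := hVL
  exact hyL (subset_sUnion_of_mem hWV (Or.inr hyV))

theorem isFσ_setOf_lt_of_forall_not_dense [PerfectlyNormalSpace Y] [SecondCountableTopology Y]
    (H : ∀ p q, p < q → ∀ L : Set Y, IsClosed L → L.Nonempty →
      ¬ (L ⊆ closure (L ∩ {y | f y ≤ p}) ∧ L ⊆ closure (L ∩ {y | q ≤ f y}))) (a : ℝ) :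
    IsFσ {y | a < f y} := by
  choose A hA hqA hAp using fun n : ℕ =>
    exists_isFσ_separation (H a (a + 1 / (n + 1)) (lt_add_of_pos_right a Nat.one_div_pos_of_nat))
  convert IsFσ.iUnion hA using 1
  refine Subset.antisymm (fun y hy => ?_) (iUnion_subset hAp)
  obtain ⟨n, hn⟩ := exists_nat_one_div_lt (sub_pos.2 (show a < f y from hy))
  exact mem_iUnion.2 ⟨n, hqA n (show a + 1 / (n + 1) ≤ f y by linarith)⟩

theorem baireClassOne_of_forall_not_dense [PerfectlyNormalSpace Y] [SecondCountableTopology Y]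
    {C : ℝ} (hC : ∀ y, |f y| ≤ C)
    (H : ∀ p q, p < q → ∀ L : Set Y, IsClosed L → L.Nonempty →
      ¬ (L ⊆ closure (L ∩ {y | f y ≤ p}) ∧ L ⊆ closure (L ∩ {y | q ≤ f y}))) :
    BaireClassOne f := by
  have H' : ∀ p q, p < q → ∀ L : Set Y, IsClosed L → L.Nonempty →
      ¬ (L ⊆ closure (L ∩ {y | -f y ≤ p}) ∧ L ⊆ closure (L ∩ {y | q ≤ -f y})) :=
    fun p q hpq L hL hLne ⟨h₁, h₂⟩ => H (-q) (-p) (neg_lt_neg hpq) L hL hLne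
      ⟨by simpa only [le_neg] using h₂, by simpa only [neg_le] using h₁⟩
  refine baireClassOne_of_isFσ_preimage_Ioo hC fun a b => ?_
  have hlt : IsFσ {y | f y < b} := by
    simpa only [neg_lt_neg_iff] using isFσ_setOf_lt_of_forall_not_dense (f := fun y => -f y) H' (-b)
  exact (isFσ_setOf_lt_of_forall_not_dense H a).inter hlt

end BaireCriterion

def IndependentSeq {X : Type*} (g : ℕ → X → ℝ) (a b : ℝ) : Prop :=
  ∀ M : Set ℕ, ∃ x, (∀ i ∈ M, g i x ≤ a) ∧ ∀ i ∉ M, b ≤ g i x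

theorem exists_mem_forall_abs_sub_lt_of_mem_closure {Y : Type*} {F : Set (Y → ℝ)} {f : Y → ℝ}
    (hf : f ∈ closure F) (S : Finset Y) {δ : ℝ} (hδ : 0 < δ) :
    ∃ g ∈ F, ∀ y ∈ S, |g y - f y| < δ := by
  have hU : ∀ᶠ g in 𝓝 f, ∀ y ∈ S, |g y - f y| < δ := (eventually_all_finset S).2 fun y _ =>
    ((continuous_apply y).tendsto f).eventually (eventually_abs_sub_lt (f y) hδ)
  obtain ⟨g, hgU, hgF⟩ := mem_closure_iff_nhds.1 hf _ hU
  exact ⟨g, hgF, hgU⟩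

section Pattern

variable {Y : Type*} {g : ℕ → Y → ℝ} {a b : ℝ} {M : Set ℕ} {k : ℕ}

def patternSet (g : ℕ → Y → ℝ) (a b : ℝ) (M : Set ℕ) (k : ℕ) : Set Y :=
  ⋂ i < k, {y | (i ∈ M → g i y < a) ∧ (i ∉ M → b < g i y)}

theorem isOpen_patternSet [TopologicalSpace Y] (hg : ∀ i < k, Continuous (g i)) :
    IsOpen (patternSet g a b M k) := by
  refine (finite_lt_nat k).isOpen_biInter fun i hi => ?_
  by_cases hiM : i ∈ M
  · simpa [hiM] using isOpen_lt (hg i hi) continuous_const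
  · simpa [hiM] using isOpen_lt continuous_const (hg i hi)

theorem patternSet_succ :
    patternSet g a b M (k + 1) =
      patternSet g a b M k ∩ {y | (k ∈ M → g k y < a) ∧ (k ∉ M → b < g k y)} := by
  ext y
  simp only [patternSet, mem_iInter₂, mem_inter_iff, Nat.lt_succ_iff_lt_or_eq, or_imp,
    forall_and, forall_eq, mem_ofPred_eq, and_and_and_comm]

theorem patternSet_congr {g' : ℕ → Y → ℝ} {M' : Set ℕ} (hg : ∀ i < k, g i = g' i)
    (hM : ∀ i < k, (i ∈ M ↔ i ∈ M')) : patternSet g a b M k = patternSet g' a b M' k := by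
  ext y
  simp only [patternSet, mem_iInter₂, mem_ofPred_eq]
  exact forall₂_congr fun i hi => by rw [hg i hi, hM i hi]

theorem patternSet_subset_of_mem {i : ℕ} (hik : i < k) (hi : i ∈ M) :
    patternSet g a b M k ⊆ {y | g i y < a} :=
  fun _ hy => (mem_iInter₂.1 hy i hik).1 hi

theorem patternSet_subset_of_notMem {i : ℕ} (hik : i < k) (hi : i ∉ M) :
    patternSet g a b M k ⊆ {y | b < g i y} :=
  fun _ hy => (mem_iInter₂.1 hy i hik).2 hi

variable {F : Set (Y → ℝ)} {f : Y → ℝ} {L : Set Y} {p q : ℝ}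

theorem exists_patternSet_succ_nonempty [TopologicalSpace Y] (hf : f ∈ closure F)
    (hp : L ⊆ closure (L ∩ {y | f y ≤ p})) (hq : L ⊆ closure (L ∩ {y | q ≤ f y}))
    (hpa : p < a) (hbq : b < q) (hg : ∀ i < k, Continuous (g i))
    (hk : ∀ M, (L ∩ patternSet g a b M k).Nonempty) :
    ∃ h ∈ F, ∀ M, (L ∩ patternSet (Function.update g k h) a b M (k + 1)).Nonempty := by
  classical
  have hwit : ∀ R : Finset ℕ, ∃ y₀ y₁, y₀ ∈ L ∩ patternSet g a b R k ∧ f y₀ ≤ p ∧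
      y₁ ∈ L ∩ patternSet g a b R k ∧ q ≤ f y₁ := fun R => by
    obtain ⟨y, hyL, hyP⟩ := hk R
    have hO := (isOpen_patternSet hg).mem_nhds hyP
    obtain ⟨y₀, hy₀P, hy₀L, hy₀p⟩ := mem_closure_iff_nhds.1 (hp hyL) _ hO
    obtain ⟨y₁, hy₁P, hy₁L, hy₁q⟩ := mem_closure_iff_nhds.1 (hq hyL) _ hO
    exact ⟨y₀, y₁, ⟨hy₀L, hy₀P⟩, hy₀p, ⟨hy₁L, hy₁P⟩, hy₁q⟩
  choose y₀ y₁ hy₀ hy₀p hy₁ hy₁q using hwit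
  set 𝓡 := (Finset.range k).powerset
  obtain ⟨h, hhF, hh⟩ := exists_mem_forall_abs_sub_lt_of_mem_closure hf
    (𝓡.image y₀ ∪ 𝓡.image y₁) (lt_min (sub_pos.2 hpa) (sub_pos.2 hbq))
  refine ⟨h, hhF, fun M => ?_⟩
  set R := (Finset.range k).filter (· ∈ M)
  have hR : R ∈ 𝓡 := Finset.mem_powerset.2 (Finset.filter_subset _ _)
  rw [patternSet_succ, Function.update_self,
    patternSet_congr (g' := g) (M' := R) (fun i hi => Function.update_of_ne hi.ne _ _)
      fun i hi => by simp [R, hi]]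
  by_cases hkM : k ∈ M
  · have := abs_sub_lt_iff.1 (hh _ (Finset.mem_union_left _ (Finset.mem_image_of_mem y₀ hR)))
    refine ⟨y₀ R, (hy₀ R).1, (hy₀ R).2, fun _ => ?_, fun h => absurd hkM h⟩
    linarith [min_le_left (a - p) (q - b), hy₀p R]
  · have := abs_sub_lt_iff.1 (hh _ (Finset.mem_union_right _ (Finset.mem_image_of_mem y₁ hR)))
    refine ⟨y₁ R, (hy₁ R).1, (hy₁ R).2, fun h => absurd h hkM, fun _ => ?_⟩
    linarith [min_le_right (a - p) (q - b), hy₁q R]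

theorem exists_patternSet_nonempty [TopologicalSpace Y] (hF : ∀ g ∈ F, Continuous g)
    (hf : f ∈ closure F) (hp : L ⊆ closure (L ∩ {y | f y ≤ p}))
    (hq : L ⊆ closure (L ∩ {y | q ≤ f y})) (hpa : p < a) (hbq : b < q) (hL : L.Nonempty) :
    ∃ h : ℕ → Y → ℝ, (∀ i, h i ∈ F) ∧ ∀ M k, (L ∩ patternSet h a b M k).Nonempty := by
  let Good : ℕ → (ℕ → Y → ℝ) → Prop := fun k g =>
    (∀ i < k, g i ∈ F) ∧ ∀ M, (L ∩ patternSet g a b M k).Nonempty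
  have step : ∀ k g, ∃ h, Good k g → Good (k + 1) (Function.update g k h) := by
    intro k g
    by_cases hk : Good k g
    · obtain ⟨h, hhF, hh⟩ := exists_patternSet_succ_nonempty hf hp hq hpa hbq
        (fun i hi => hF _ (hk.1 i hi)) hk.2
      refine ⟨h, fun _ => ⟨fun i hi => ?_, hh⟩⟩
      rcases Nat.lt_succ_iff_lt_or_eq.1 hi with hik | rfl
      · rw [Function.update_of_ne hik.ne]
        exact hk.1 i hik
      · rwa [Function.update_self]
    · exact ⟨0, fun h => absurd h hk⟩
  choose next hnext using step
  -- `P k` holds the first `k` terms of the sequence under construction.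
  let P : ℕ → ℕ → Y → ℝ := fun k =>
    Nat.rec (fun _ => 0) (fun k g => Function.update g k (next k g)) k
  have hP : ∀ k, P (k + 1) = Function.update (P k) k (next k (P k)) := fun _ => rfl
  have hgood : ∀ k, Good k (P k) := by
    intro k
    induction k with
    | zero => exact ⟨fun i hi => absurd hi (Nat.not_lt_zero i), fun M => by simpa [patternSet]⟩
    | succ k ih => exact hnext k (P k) ih
  have hPdiag : ∀ k, ∀ i < k, P k i = P (i + 1) i := by
    intro k
    induction k with
    | zero => exact fun i hi => absurd hi (Nat.not_lt_zero i)
    | succ k ih =>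
      intro i hi
      rcases Nat.lt_succ_iff_lt_or_eq.1 hi with hik | rfl
      · rw [hP, Function.update_of_ne hik.ne, ih i hik]
      · rfl
  refine ⟨fun i => P (i + 1) i, fun i => (hgood (i + 1)).1 i (Nat.lt_succ_self i), fun M k => ?_⟩
  rw [patternSet_congr (g' := P k) (M' := M) (fun i hi => (hPdiag k i hi).symm)
    fun _ _ => Iff.rfl]
  exact (hgood k).2 M

theorem independentSeq_of_patternSet_nonempty [TopologicalSpace Y] [CompactSpace Y]
    (hg : ∀ i, Continuous (g i)) (h : ∀ M k, (L ∩ patternSet g a b M k).Nonempty) :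
    IndependentSeq g a b := by
  intro M
  obtain ⟨z, hz⟩ := IsCompact.nonempty_iInter_of_sequence_nonempty_isCompact_isClosed
    (fun k => closure (L ∩ patternSet g a b M k))
    (fun k => closure_mono (inter_subset_inter_right L (patternSet_succ ▸ inter_subset_left)))
    (fun k => (h M k).closure) isClosed_closure.isCompact fun _ => isClosed_closure
  have hzi : ∀ i, z ∈ closure (patternSet g a b M (i + 1)) := fun i =>
    closure_mono inter_subset_right (mem_iInter.1 hz (i + 1))
  refine ⟨z, fun i hi => ?_, fun i hi => ?_⟩
  · exact closure_lt_subset_le (hg i) continuous_const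
      (closure_mono (patternSet_subset_of_mem (Nat.lt_succ_self i) hi) (hzi i))
  · exact closure_lt_subset_le continuous_const (hg i)
      (closure_mono (patternSet_subset_of_notMem (Nat.lt_succ_self i) hi) (hzi i))

theorem exists_independentSeq_of_dense [TopologicalSpace Y] [CompactSpace Y]
    (hF : ∀ g ∈ F, Continuous g) (hf : f ∈ closure F) (hp : L ⊆ closure (L ∩ {y | f y ≤ p}))
    (hq : L ⊆ closure (L ∩ {y | q ≤ f y})) (hpa : p < a) (hbq : b < q) (hL : L.Nonempty) :
    ∃ h : ℕ → Y → ℝ, (∀ i, h i ∈ F) ∧ IndependentSeq h a b := by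
  obtain ⟨h, hhF, hne⟩ := exists_patternSet_nonempty hF hf hp hq hpa hbq hL
  exact ⟨h, hhF, independentSeq_of_patternSet_nonempty (fun i => hF _ (hhF i)) hne⟩

end Pattern

def IsIndependentFamily {ι α : Type*} (E : ι → Set α) : Prop :=
  ∀ I J : Finset ι, Disjoint I J → ∃ n, (∀ r ∈ I, n ∈ E r) ∧ ∀ s ∈ J, n ∉ E s

theorem exists_isIndependentFamily_real_nat : ∃ E : ℝ → Set ℕ, IsIndependentFamily E := by
  obtain ⟨e, he⟩ := exists_surjective_nat (Finset (ℚ × ℚ))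
  have hint : ∀ (J : Finset ℝ) (r : ℝ), ∃ uv : ℚ × ℚ,
      r ∈ Ioo (uv.1 : ℝ) uv.2 ∧ Ioo (uv.1 : ℝ) uv.2 ⊆ (↑(J.erase r))ᶜ := fun J r => by
    obtain ⟨v, hvB, hrv, hvJ⟩ := Real.isTopologicalBasis_Ioo_rat.exists_subset_of_mem_open
      (by simp : r ∈ (↑(J.erase r) : Set ℝ)ᶜ) (J.erase r).finite_toSet.isClosed.isOpen_compl
    simp only [mem_iUnion, mem_singleton_iff] at hvB
    obtain ⟨u, w, -, rfl⟩ := hvB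
    exact ⟨(u, w), hrv, hvJ⟩
  refine ⟨fun r => {n | ∃ uv ∈ e n, r ∈ Ioo (uv.1 : ℝ) uv.2}, fun I J hIJ => ?_⟩
  choose uv huv hJ using hint J
  obtain ⟨n, hn⟩ := he (I.image uv)
  refine ⟨n, fun r hr => ⟨uv r, hn ▸ Finset.mem_image_of_mem _ hr, huv r⟩, ?_⟩
  rintro s hs ⟨w, hw, hsw⟩
  obtain ⟨r, hr, rfl⟩ := Finset.mem_image.1 (hn ▸ hw)
  exact hJ r hsw (Finset.mem_erase.2 ⟨fun hsr => Finset.disjoint_left.1 hIJ hr (hsr ▸ hs), hs⟩)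

theorem CountableTightness.exists_countable_subset_mem_closure {Z : Type*} [TopologicalSpace Z]
    {S A : Set Z} (h : CountableTightness S) (hAS : A ⊆ S) {y : Z} (hyS : y ∈ S)
    (hyA : y ∈ closure A) : ∃ B ⊆ A, B.Countable ∧ y ∈ closure B := by
  obtain ⟨B, hB, hBc, hyB⟩ := h ((↑) ⁻¹' A) ⟨y, hyS⟩ <| by
    rwa [closure_subtype, Subtype.image_preimage_coe, inter_eq_right.2 hAS]
  exact ⟨(↑) '' B, image_subset_iff.2 hB, hBc.image _, closure_subtype.1 hyB⟩

theorem closure_subset_pi_Icc {X : Type*} {G : Set (X → ℝ)} {C : ℝ}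
    (hG : ∀ g ∈ G, ∀ x, |g x| ≤ C) : closure G ⊆ univ.pi fun _ => Icc (-C) C :=
  closure_minimal (fun g hg x _ => abs_le.1 (hG g hg x)) (isClosed_set_pi fun _ _ => isClosed_Icc)

theorem exists_mem_closure_pattern_of_isIndependentFamily {X ι : Type*} {G : Set (X → ℝ)}
    (hK : IsCompact (closure G)) {h : ℕ → X → ℝ} (hhG : ∀ i, h i ∈ G) {E : ι → Set ℕ}
    (hE : IsIndependentFamily E) {p q : ℝ} {z : ι → X}
    (hz : ∀ r, (∀ i ∈ E r, h i (z r) ≤ p) ∧ ∀ i ∉ E r, q ≤ h i (z r)) (I : Finset ι) :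
    ∃ w ∈ closure G, (∀ r ∈ I, w (z r) ≤ p) ∧ ∀ r ∉ I, q ≤ w (z r) := by
  classical
  let D : ι → Set (X → ℝ) := fun r => if r ∈ I then {w | w (z r) ≤ p} else {w | q ≤ w (z r)}
  have hD : ∀ r, IsClosed (D r) := fun r => by
    unfold D
    split_ifs
    exacts [isClosed_le (continuous_apply _) continuous_const,
      isClosed_le continuous_const (continuous_apply _)]
  obtain ⟨w, hw, hwD⟩ := hK.inter_iInter_nonempty D hD fun J => by
    obtain ⟨n, hnI, hnJ⟩ := hE I (J \ I) Finset.disjoint_sdiff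
    refine ⟨h n, subset_closure (hhG n), mem_iInter₂.2 fun r hr => ?_⟩
    by_cases hrI : r ∈ I
    · simpa only [D, if_pos hrI, mem_ofPred_eq] using (hz r).1 n (hnI r hrI)
    · simpa only [D, if_neg hrI, mem_ofPred_eq] using
        (hz r).2 n (hnJ r (Finset.mem_sdiff.2 ⟨hr, hrI⟩))
  refine ⟨w, hw, fun r hr => ?_, fun r hr => ?_⟩
  · simpa only [D, if_pos hr, mem_ofPred_eq] using mem_iInter.1 hwD r
  · simpa only [D, if_neg hr, mem_ofPred_eq] using mem_iInter.1 hwD r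

theorem not_countableTightness_closure_of_independentSeq {X : Type*} {G : Set (X → ℝ)} {C : ℝ}
    (hG : ∀ g ∈ G, ∀ x, |g x| ≤ C) {h : ℕ → X → ℝ} (hhG : ∀ i, h i ∈ G) {p q : ℝ}
    (hpq : p < q) (hind : IndependentSeq h p q) : ¬ CountableTightness (closure G) := by
  intro htg
  have hK : IsCompact (closure G) := (isCompact_univ_pi fun _ => isCompact_Icc).of_isClosed_subset
    isClosed_closure (closure_subset_pi_Icc hG)
  obtain ⟨E, hE⟩ := exists_isIndependentFamily_real_nat
  choose z hz using fun r => hind (E r)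
  have hpattern := exists_mem_closure_pattern_of_isIndependentFamily hK hhG hE hz
  set A := {w ∈ closure G | {r | w (z r) < q}.Finite}
  have hAG : closure A ⊆ closure G := closure_minimal (sep_subset _ _) isClosed_closure
  obtain ⟨y, hyA, hy⟩ := (hK.of_isClosed_subset isClosed_closure hAG).inter_iInter_nonempty
    (fun r => {w | w (z r) ≤ p}) (fun r => isClosed_le (continuous_apply _) continuous_const)
    fun I => by
      obtain ⟨w, hw, hwI, hwq⟩ := hpattern I
      refine ⟨w, subset_closure ⟨hw, I.finite_toSet.subset fun r hr => ?_⟩, mem_iInter₂.2 hwI⟩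
      exact not_not.1 fun hrI => (hwq r hrI).not_gt hr
  obtain ⟨B, hBA, hBc, hyB⟩ :=
    htg.exists_countable_subset_mem_closure (sep_subset _ _) (hAG hyA) hyA
  obtain ⟨r, hr⟩ : ∃ r, r ∉ ⋃ w ∈ B, {r | w (z r) < q} := by
    by_contra! hall
    exact Cardinal.not_countable_real
      ((hBc.biUnion fun w hw => (hBA hw).2.countable).mono fun r _ => hall r)
  have hBq : B ⊆ {w | q ≤ w (z r)} := fun w hw =>
    show q ≤ w (z r) from not_lt.1 fun h => hr (mem_biUnion hw h)
  have hyq : q ≤ y (z r) :=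
    closure_minimal hBq (isClosed_le continuous_const (continuous_apply _)) hyB
  linarith [show y (z r) ≤ p from mem_iInter.1 hy r]

theorem baireClassOne_of_mem_closure_of_secondCountable {Y : Type*} [TopologicalSpace Y]
    [CompactSpace Y] [PerfectlyNormalSpace Y] [SecondCountableTopology Y] {F : Set (Y → ℝ)}
    (hF : ∀ g ∈ F, Continuous g) {f : Y → ℝ} (hf : f ∈ closure F) {C : ℝ} (hC : ∀ y, |f y| ≤ C)
    (hind : ∀ h : ℕ → Y → ℝ, (∀ i, h i ∈ F) → ∀ a b, a < b → ¬ IndependentSeq h a b) :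
    BaireClassOne f := by
  refine baireClassOne_of_forall_not_dense hC fun p q hpq L _ hL ⟨hp, hq⟩ => ?_
  obtain ⟨h, hhF, hh⟩ := exists_independentSeq_of_dense hF hf hp hq
    (a := (2 * p + q) / 3) (b := (p + 2 * q) / 3) (by linarith) (by linarith) hL
  exact hind h hhF _ _ (by linarith) hh

/-- The topology induced by the countably many functions in `F` is coarser than that of `X`, hence
still compact, and it is pseudo-metrizable and second countable. -/
theorem baireClassOne_of_mem_closure {X : Type*} [tX : TopologicalSpace X] [hcX : CompactSpace X]
    {F : Set (X → ℝ)} (hFc : F.Countable) (hF : ∀ g ∈ F, Continuous g) {f : X → ℝ}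
    (hf : f ∈ closure F) {C : ℝ} (hC : ∀ x, |f x| ≤ C)
    (hind : ∀ h : ℕ → X → ℝ, (∀ i, h i ∈ F) → ∀ a b, a < b → ¬ IndependentSeq h a b) :
    BaireClassOne f := by
  have := hFc.to_subtype
  let π : X → F → ℝ := fun x g => g.1 x
  have hπ : Continuous π := continuous_pi fun g => hF g.1 g.2
  have hid : Continuous[tX, .induced π inferInstance] id := continuous_induced_rng.2 hπ
  refine BaireClassOne.of_le (continuous_iff_le_induced.1 hπ) ?_
  let t : TopologicalSpace X := .induced π inferInstance
  have : CompactSpace X :=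
    @Function.Surjective.compactSpace X X tX t id hid hcX Function.surjective_id
  have : TopologicalSpace.PseudoMetrizableSpace X :=
    Topology.IsInducing.pseudoMetrizableSpace (f := π) ⟨rfl⟩
  have : SecondCountableTopology X := TopologicalSpace.secondCountableTopology_induced X _ π
  refine baireClassOne_of_mem_closure_of_secondCountable (fun g hg => ?_) hf hC hind
  exact (continuous_apply (⟨g, hg⟩ : F)).comp (continuous_induced_dom (f := π))

/-- Let `X` be a compact space and `G` a uniformly bounded subset of `C(X)`.  If the closure of
`G` in `ℝ^X` has countable tightness, then the closure of `G` in `ℝ^X` is contained in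
`B₁(X)`. -/
theorem compact_tightness_closure_subset_baireOne
    {X : Type*} [TopologicalSpace X] [CompactSpace X]
    (G : Set (X → ℝ)) (hGcont : ∀ g ∈ G, Continuous g)
    (hGbd : ∃ C : ℝ, ∀ g ∈ G, ∀ x : X, |g x| ≤ C)
    (htg : CountableTightness ↥(closure G)) :
    ∀ f ∈ closure G, BaireClassOne f := by
  obtain ⟨C, hC⟩ := hGbd
  intro f hf
  obtain ⟨B, hBG, hBc, hfB⟩ := htg.exists_countable_subset_mem_closure subset_closure hf hf
  refine baireClassOne_of_mem_closure hBc (fun g hg => hGcont g (hBG hg)) hfB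
    (fun x => abs_le.2 (closure_subset_pi_Icc hC hf x (mem_univ x))) fun h hhB a b hab hh => ?_
  exact not_countableTightness_closure_of_independentSeq hC (fun i => hBG (hhB i)) hab hh htg
end

section
/- Let X = [0,ω₁] be the space of all ordinals less than or equal to the first uncountable ordinal ω₁, with the order topology, and let G = { χ_{[α,ω₁]} : α < ω₁ and α is not a limit ordinal }, where χ_A denotes the characteristic function of A ⊆ X. Then the characteristic function χ_{{ω₁}} of the singleton {ω₁} belongs to the closure of G in ℝ^X, but χ_{{ω₁}} does not belong to the closure in ℝ^X of any countable subset of G; in particular, the closure of G in ℝ^X does not have countable tightness. -/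
open Filter Topology Set

/-- The first uncountable ordinal `ω₁`. -/
noncomputable def omega1 : Ordinal := (Cardinal.aleph 1).ord

/-- The space `X = [0, ω₁]` of ordinals less than or equal to `ω₁`. -/
def OrdClosedInterval : Type _ := {o : Ordinal // o ≤ omega1}

/-- `G = { χ_{[α,ω₁]} : α < ω₁, α not a limit ordinal }` as a set of real-valued functions
on `X = [0, ω₁]`. -/
noncomputable def exampleG : Set (OrdClosedInterval → ℝ) :=
  {f | ∃ α : Ordinal, α < omega1 ∧ ¬ Order.IsSuccLimit α ∧
    f = fun x : OrdClosedInterval => if α ≤ x.1 then (1 : ℝ) else 0}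

/-- The characteristic function `χ_{{ω₁}}` of the singleton `{ω₁}`. -/
noncomputable def chiOmega1 : OrdClosedInterval → ℝ :=
  fun x => if x.1 = omega1 then (1 : ℝ) else 0

/-!
`χ_{{ω₁}}` is the pointwise limit of the net `α ↦ χ_{[α+1, ω₁]}`, `α < ω₁`: at `ω₁` every term is
`1`, and at `x < ω₁` the terms vanish as soon as `α ≥ x`. On the other hand, countably many
`α < ω₁` are bounded by some `β < ω₁`, so every member of a countable subset of `G` takes the
value `1` at `β`, a closed condition that `χ_{{ω₁}}` violates.
-/

open Order Ordinal

theorem tendsto_ite_succ_le_atTop {α M : Type*} [LinearOrder α] [SuccOrder α]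
    [TopologicalSpace M] (p q : M) {ℓ x : α} (hx : x ≤ ℓ) :
    Tendsto (fun a : Iio ℓ => if succ a.1 ≤ x then p else q) atTop
      (𝓝 (if x = ℓ then p else q)) := by
  rcases hx.eq_or_lt with rfl | hlt
  · rw [if_pos rfl]
    exact tendsto_const_nhds.congr fun a => (if_pos (succ_le_of_lt a.2)).symm
  · rw [if_neg hlt.ne]
    refine tendsto_const_nhds.congr' ?_
    filter_upwards [eventually_ge_atTop ⟨x, hlt⟩] with a (ha : x ≤ a.1)
    have hx : x < succ a.1 := ha.trans_lt (lt_succ_of_not_isMax (not_isMax_of_lt a.2))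
    exact (if_neg hx.not_ge).symm

theorem omega1_eq_omega_one : omega1 = ω₁ :=
  Cardinal.ord_aleph 1

theorem isSuccLimit_omega1 : IsSuccLimit omega1 :=
  Cardinal.isSuccLimit_ord (Cardinal.aleph0_le_aleph 1)

theorem chiOmega1_mem_closure_exampleG : chiOmega1 ∈ closure exampleG := by
  have : Nonempty (Iio omega1) := ⟨⟨0, isSuccLimit_omega1.bot_lt⟩⟩
  have hmem (a : Iio omega1) :
      (fun x : OrdClosedInterval => if succ a.1 ≤ x.1 then (1 : ℝ) else 0) ∈ exampleG :=
    ⟨succ a.1, isSuccLimit_omega1.succ_lt a.2, not_isSuccLimit_succ _, rfl⟩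
  exact mem_closure_of_tendsto
    (tendsto_pi_nhds.2 fun x => tendsto_ite_succ_le_atTop 1 0 x.2) (Eventually.of_forall hmem)

theorem chiOmega1_notMem_closure_of_countable (B : Set (OrdClosedInterval → ℝ))
    (hBG : B ⊆ exampleG) (hB : B.Countable) : chiOmega1 ∉ closure B := by
  intro hcl
  have := hB.to_subtype
  choose α hα_lt _ hα using fun f : B => hBG f.2
  set β := ⨆ f : B, α f
  have hβ : β < omega1 := by
    rw [omega1_eq_omega_one] at hα_lt ⊢
    exact Ordinal.iSup_lt_omega_one hα_lt
  have hB_one : B ⊆ (fun g => g ⟨β, hβ.le⟩) ⁻¹' {1} := fun f hf =>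
    (congrFun (hα ⟨f, hf⟩) _).trans (if_pos (Ordinal.le_iSup α _))
  have h := closure_minimal hB_one (isClosed_singleton.preimage (continuous_apply _)) hcl
  simp [chiOmega1, hβ.ne] at h

theorem not_countableTightness_of_forall_countable {X : Type*} [TopologicalSpace X]
    {S A : Set X} {y : X} (hAS : A ⊆ S) (hyS : y ∈ S) (hy : y ∈ closure A)
    (hA : ∀ B ⊆ A, B.Countable → y ∉ closure B) : ¬ CountableTightness S := by
  intro h
  obtain ⟨B, hBA, hB, hyB⟩ := h (Subtype.val ⁻¹' A) ⟨y, hyS⟩ <| by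
    rwa [closure_subtype, Subtype.image_preimage_coe, inter_eq_right.2 hAS]
  exact hA _ ((image_mono hBA).trans (image_preimage_subset _ _)) (hB.image _)
    (closure_subtype.1 hyB)

/-- `χ_{{ω₁}}` belongs to the closure of `G` in `ℝ^X`, but it does not belong to the closure of
any countable subset of `G`; in particular the closure of `G` in `ℝ^X` does not have countable
tightness. -/
theorem exampleG_closure_not_countably_tight :
    chiOmega1 ∈ closure exampleG ∧
    (∀ B ⊆ exampleG, B.Countable → chiOmega1 ∉ closure B) ∧
    ¬ CountableTightness ↥(closure exampleG) :=
  ⟨chiOmega1_mem_closure_exampleG, chiOmega1_notMem_closure_of_countable,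
    not_countableTightness_of_forall_countable subset_closure chiOmega1_mem_closure_exampleG
      chiOmega1_mem_closure_exampleG chiOmega1_notMem_closure_of_countable⟩
end

section
/- Let X be a topological space, (M,d) a metric space with d bounded by 1, and let f : X → M be a function. Then f is continuous if and only if the associated function f̌ : X × 𝒦 → ℝ, defined by f̌(x,α) = α(f(x)), is continuous. -/
/-!
The family of `1`-Lipschitz functions is equicontinuous, so evaluation `(m, α) ↦ α m` is jointly
continuous for the pointwise topology; composing with `f × id` gives continuity of `f̌`.
Conversely, since `d ≤ 1`, the function `d(·, f x₀)` lies in `𝒦`, and continuity of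
`x ↦ f̌(x, d(·, f x₀)) = d(f x, f x₀)` at `x₀` is continuity of `f` at `x₀`.
-/

open Filter Topology Set

/-- For a metric space `M` (with metric bounded by `1`), `𝒦` is the set of all functions
`α : M → [-1,1]` satisfying `|α m₁ - α m₂| ≤ d(m₁, m₂)`, regarded as a subspace of `ℝ^M` with
the pointwise convergence topology. -/
abbrev Kspace (M : Type*) [MetricSpace M] : Type _ :=
  {α : M → ℝ // (∀ m, α m ∈ Set.Icc (-1 : ℝ) 1) ∧
    ∀ m₁ m₂ : M, |α m₁ - α m₂| ≤ dist m₁ m₂}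

/-- For `f : X → M`, the associated function `f̌ : X × 𝒦 → ℝ`, `f̌(x, α) = α (f x)`. -/
def check {X : Type*} {M : Type*} [MetricSpace M] (f : X → M) : X × Kspace M → ℝ :=
  fun p => p.2.1 (f p.1)

theorem continuous_eval_of_forall_abs_sub_le_dist {M : Type*} [MetricSpace M]
    {P : (M → ℝ) → Prop} (hP : ∀ α, P α → ∀ m₁ m₂ : M, |α m₁ - α m₂| ≤ dist m₁ m₂) :
    Continuous fun p : M × Subtype P => p.2.1 p.1 := by
  refine continuous_iff_continuousAt.mpr fun ⟨m₀, α₀⟩ => ?_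
  have hbound : ∀ p : M × Subtype P,
      dist (p.2.1 p.1) (α₀.1 m₀) ≤ dist p.1 m₀ + dist (p.2.1 m₀) (α₀.1 m₀) := fun p =>
    (dist_triangle _ (p.2.1 m₀) _).trans
      (add_le_add_left (hP _ p.2.2 p.1 m₀) _)
  have hevalAt : Continuous fun p : M × Subtype P => p.2.1 m₀ :=
    (continuous_apply m₀).comp (continuous_subtype_val.comp continuous_snd)
  have hlim : Tendsto (fun p : M × Subtype P => dist p.1 m₀ + dist (p.2.1 m₀) (α₀.1 m₀))
      (𝓝 (m₀, α₀)) (𝓝 0) := by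
    refine Continuous.tendsto' ?_ (m₀, α₀) 0 (by simp)
    exact (continuous_fst.dist continuous_const).add (hevalAt.dist continuous_const)
  exact tendsto_iff_dist_tendsto_zero.mpr
    (squeeze_zero (fun _ => dist_nonneg) hbound hlim)

theorem continuous_of_forall_continuous_dist {X M : Type*} [TopologicalSpace X]
    [MetricSpace M] {f : X → M} (h : ∀ x₀, Continuous fun x => dist (f x) (f x₀)) :
    Continuous f :=
  continuous_iff_continuousAt.mpr fun x₀ =>
    tendsto_iff_dist_tendsto_zero.mpr (by simpa using (h x₀).tendsto x₀)

namespace Kspace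

variable {M : Type*} [MetricSpace M]

def distTo (hd : ∀ m₁ m₂ : M, dist m₁ m₂ ≤ 1) (y : M) : Kspace M :=
  ⟨fun m => dist m y, fun m => ⟨by linarith [dist_nonneg (x := m) (y := y)], hd m y⟩,
    fun m₁ m₂ => abs_dist_sub_le m₁ m₂ y⟩

theorem continuous_eval : Continuous fun p : M × Kspace M => p.2.1 p.1 :=
  continuous_eval_of_forall_abs_sub_le_dist fun _ hα => hα.2

end Kspace

/-- Let `X` be a topological space and `(M, d)` a metric space with `d` bounded by `1`.  A
function `f : X → M` is continuous iff `f̌ : X × 𝒦 → ℝ` is continuous. -/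
theorem continuous_iff_continuous_check
    {X M : Type*} [TopologicalSpace X] [MetricSpace M]
    (hd : ∀ m₁ m₂ : M, dist m₁ m₂ ≤ 1) (f : X → M) :
    Continuous f ↔ Continuous (check f) := by
  refine ⟨fun hf => Kspace.continuous_eval.comp (hf.prodMap continuous_id), fun h => ?_⟩
  exact continuous_of_forall_continuous_dist fun x₀ =>
    h.comp (continuous_id.prodMk (continuous_const (y := Kspace.distTo hd (f x₀))))
end

section
/- Let X be a topological space, (M,d) a metric space with d bounded by 1, and let G ⊆ C(X,M) be such that the closure of G in M^X is compact. Then the map g ↦ ǧ is a homeomorphism of the closure of G in M^X onto the closure of Ǧ = { ǧ : g ∈ G } in ℝ^{X×𝒦}. -/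
open Filter Topology Set

/-! Both the map `g ↦ ǧ` and its inverse on `closure G` are continuous: the first because each
`α ∈ 𝒦` is `1`-Lipschitz, the second because `ǧ` still determines `g` (test against the truncated
distances `min (d(·, y)) 1 ∈ 𝒦`) and a continuous injection of the compact space `closure G` into a
Hausdorff space is an embedding. Compactness also makes the image of `closure G` closed, hence equal
to the closure of `Ǧ`. -/

section CompactImage

variable {Y Z : Type*} [TopologicalSpace Y] [TopologicalSpace Z] [T2Space Z] {f : Y → Z}
  {s : Set Y}

theorem Continuous.image_closure_of_isCompact_closure (hf : Continuous f)
    (hs : IsCompact (closure s)) : f '' closure s = closure (f '' s) :=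
  (image_closure_subset_closure_image hf).antisymm <|
    closure_minimal (image_mono subset_closure) (hs.image hf).isClosed

noncomputable def Continuous.homeomorphImageOfInjOn (hf : Continuous f) (hinj : InjOn f s)
    (hs : IsCompact s) : s ≃ₜ f '' s :=
  haveI := isCompact_iff_compactSpace.mp hs
  Continuous.homeoOfEquivCompactToT2 (f := Equiv.Set.imageOfInjOn f s hinj)
    ((hf.comp continuous_subtype_val).subtype_mk _)

end CompactImage

namespace Kspace

variable {M : Type*} [MetricSpace M]

theorem lipschitzWith (α : Kspace M) : LipschitzWith 1 α.1 :=
  LipschitzWith.of_dist_le_mul fun m₁ m₂ => by simpa [Real.dist_eq] using α.2.2 m₁ m₂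

def truncDist (y : M) : Kspace M :=
  ⟨fun m => min (dist m y) 1,
    fun m => ⟨by linarith [le_min (dist_nonneg (x := m) (y := y)) zero_le_one], min_le_right _ _⟩,
    fun m₁ m₂ => calc
      |min (dist m₁ y) 1 - min (dist m₂ y) 1| ≤ max |dist m₁ y - dist m₂ y| |1 - 1| :=
        abs_min_sub_min_le_max _ _ _ _
      _ ≤ dist m₁ m₂ := by simpa using abs_dist_sub_le m₁ m₂ y⟩

end Kspace

section Check

variable {X M : Type*} [MetricSpace M]

theorem continuous_check : Continuous (check : (X → M) → (X × Kspace M → ℝ)) :=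
  continuous_pi fun p => p.2.lipschitzWith.continuous.comp (continuous_apply p.1)

theorem check_injective : Function.Injective (check : (X → M) → (X × Kspace M → ℝ)) := by
  intro f g h
  funext x
  have hdist : min (dist (g x) (f x)) 1 = 0 := by
    simpa [check, Kspace.truncDist] using (congrFun h (x, Kspace.truncDist (f x))).symm
  have : dist (g x) (f x) = 0 := by
    rcases min_eq_iff.mp hdist with ⟨h₀, -⟩ | ⟨h₁, -⟩
    · exact h₀
    · norm_num at h₁
  exact (dist_eq_zero.mp this).symm

end Check

theorem closure_homeomorph_closure_check_general
    {X M : Type*} [MetricSpace M]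
    (G : Set (X → M))
    (hGcomp : IsCompact (closure G)) :
    ∃ e : ↥(closure G) ≃ₜ ↥(closure (check '' G : Set (X × Kspace M → ℝ))),
      ∀ g : ↥(closure G), (e g : X × Kspace M → ℝ) = check g.1 :=
  ⟨(continuous_check.homeomorphImageOfInjOn check_injective.injOn hGcomp).trans
      (Homeomorph.setCongr (continuous_check.image_closure_of_isCompact_closure hGcomp)),
    fun _ => rfl⟩

/-- Let `X` be a topological space, `(M, d)` a metric space with `d` bounded by `1`, and
`G ⊆ C(X, M)` such that the closure of `G` in `M^X` is compact.  Then `g ↦ ǧ` is a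
homeomorphism of the closure of `G` in `M^X` onto the closure of `Ǧ` in `ℝ^{X × 𝒦}`. -/
theorem closure_homeomorph_closure_check
    {X M : Type*} [TopologicalSpace X] [MetricSpace M]
    (hd : ∀ m₁ m₂ : M, dist m₁ m₂ ≤ 1)
    (G : Set (X → M)) (hGcont : ∀ g ∈ G, Continuous g)
    (hGcomp : IsCompact (closure G)) :
    ∃ e : ↥(closure G) ≃ₜ ↥(closure (check '' G : Set (X × Kspace M → ℝ))),
      ∀ g : ↥(closure G), (e g : X × Kspace M → ℝ) = check g.1 :=
  closure_homeomorph_closure_check_general G hGcomp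
end

section
/- Let X be a Polish space, (M,d) a metric space, and let (fₙ) be a sequence in C(X,M) such that the closure of {fₙ : n ∈ ω} in M^X is compact. Then either (fₙ) contains a pointwise Cauchy subsequence, or (fₙ) contains a subsequence whose closure in M^X is homeomorphic to βω. -/
/-!
Fix a countable `S ⊆ M` whose closure contains every value `f n x`, and say that `(f n x)`
oscillates along `L ⊆ ℕ` between two balls centred in `S` if it visits each of them for
infinitely many `n ∈ L`. Countably many pairs (basic open set `U` of `X`, pair of balls) are
decided by one infinite `D ⊆ ℕ`: either no point of `U` oscillates along `D`, or every
infinite `L ⊆ D` admits a point of `U` oscillating along `L`. If no point oscillates along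
`D` between balls with disjoint closures, compactness makes `(f n x)_{n ∈ D}` Cauchy for
every `x`. Otherwise oscillation is hereditary near an oscillating point, and a Cantor scheme
of nested balls in the complete space `X`, shrunk at each level by continuity of one more
`f n`, gives a subsequence `f ∘ φ` realising every pattern `β : ℕ → Bool` at some point.
Then disjoint sets of indices have disjoint closures in `M^X`, which characterises `βℕ`
among the compactifications of `ℕ`.
-/

open Filter Topology Set Metric

theorem exists_infinite_forall_diff_finite_of_antitone {M : ℕ → Set ℕ} (hM : Antitone M)
    (hinf : ∀ t, (M t).Infinite) : ∃ D : Set ℕ, D.Infinite ∧ ∀ t, (D \ M t).Finite := by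
  choose d hdM hdt using fun t => (hinf t).exists_gt t
  refine ⟨range d, infinite_of_not_bddAbove ?_, fun t => ((finite_Iio t).image d).subset ?_⟩
  · rintro ⟨N, hN⟩
    exact (hdt N).not_ge (hN (mem_range_self N))
  · rintro _ ⟨⟨s, rfl⟩, hs⟩
    exact ⟨s, not_le.1 fun hts => hs (hM hts (hdM s)), rfl⟩

-- Step `t` refines `univ` so as to decide `G t`; as `G t` ignores finite changes of its
-- argument, a pseudo-intersection of all the refinements decides every `G t` at once.
theorem exists_infinite_forall_or_forall_not_nat (G : ℕ → Set ℕ → Prop)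
    (hG : ∀ t L L', G t L → (L' \ L).Finite → G t L') :
    ∃ D : Set ℕ, D.Infinite ∧ ∀ t, G t D ∨ ∀ L ⊆ D, L.Infinite → ¬ G t L := by
  have hstep : ∀ t (L : {L : Set ℕ // L.Infinite}), ∃ L' : {L' : Set ℕ // L'.Infinite},
      L'.1 ⊆ L.1 ∧ (G t L' ∨ ∀ L'' ⊆ L'.1, L''.Infinite → ¬ G t L'') := by
    intro t L
    by_cases h : ∃ L' ⊆ L.1, L'.Infinite ∧ G t L'
    · obtain ⟨L', hL'L, hL', hGL'⟩ := h
      exact ⟨⟨L', hL'⟩, hL'L, Or.inl hGL'⟩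
    · push Not at h
      exact ⟨L, subset_rfl, Or.inr h⟩
  choose next hsub hdec using hstep
  let M : ℕ → {L : Set ℕ // L.Infinite} := fun t => Nat.rec ⟨univ, infinite_univ⟩ next t
  obtain ⟨D, hD, hDM⟩ := exists_infinite_forall_diff_finite_of_antitone (M := fun t => (M t).1)
    (antitone_nat_of_succ_le fun t => hsub t (M t)) fun t => (M t).2
  refine ⟨D, hD, fun t => (hdec t (M t)).imp (fun h => hG t _ _ h (hDM (t + 1))) ?_⟩
  intro h L hLD hL hGL
  have hfin : (L \ (M (t + 1)).1).Finite := (hDM (t + 1)).subset (sdiff_subset_sdiff_left hLD)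
  refine h (L ∩ (M (t + 1)).1) inter_subset_right ?_
    (hG t L _ hGL (finite_empty.subset fun n hn => hn.2 hn.1.1))
  simpa only [sdiff_sdiff_right_self] using hL.sdiff hfin

theorem exists_infinite_forall_or_forall_not {J : Type*} [Countable J] (G : J → Set ℕ → Prop)
    (hG : ∀ j L L', G j L → (L' \ L).Finite → G j L') :
    ∃ D : Set ℕ, D.Infinite ∧ ∀ j, G j D ∨ ∀ L ⊆ D, L.Infinite → ¬ G j L := by
  cases isEmpty_or_nonempty J
  · exact ⟨univ, infinite_univ, isEmptyElim⟩
  · obtain ⟨e, he⟩ := exists_surjective_nat J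
    obtain ⟨D, hD, hdec⟩ := exists_infinite_forall_or_forall_not_nat (G ∘ e) fun t => hG (e t)
    exact ⟨D, hD, he.forall.2 hdec⟩

theorem exists_infinite_forall_exists_mem_nhds {X R : Type*} [TopologicalSpace X]
    [SecondCountableTopology X] [Countable R] (osc : R → X → Set ℕ → Prop)
    (hosc : ∀ r x L L', osc r x L' → (L' \ L).Finite → osc r x L) :
    ∃ D : Set ℕ, D.Infinite ∧ ∀ r z, osc r z D → ∀ W ∈ 𝓝 z, ∀ L ⊆ D, L.Infinite →
      ∃ x ∈ W, osc r x L := by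
  obtain ⟨𝓑, h𝓑c, -, h𝓑⟩ := TopologicalSpace.exists_countable_basis X
  have := h𝓑c.to_subtype
  obtain ⟨D, hD, hdec⟩ := exists_infinite_forall_or_forall_not
    (fun (p : 𝓑 × R) L => ∀ x ∈ (p.1 : Set X), ¬ osc p.2 x L)
    fun p L L' hL hfin x hx hx' => hL x hx (hosc _ _ _ _ hx' hfin)
  refine ⟨D, hD, fun r z hz W hW L hLD hL => ?_⟩
  obtain ⟨U, hU𝓑, hzU, hUW⟩ := h𝓑.mem_nhds_iff.1 hW
  have hdecU := (hdec (⟨U, hU𝓑⟩, r)).resolve_left fun h => h z hzU hz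
  push Not at hdecU
  obtain ⟨x, hxU, hx⟩ := hdecU L hLD hL
  exact ⟨x, hUW hxU, hx⟩

def Oscillates {X Y : Type*} (f : ℕ → X → Y) (V : Bool → Set Y) (x : X) (L : Set ℕ) : Prop :=
  ∀ b, {n ∈ L | f n x ∈ V b}.Infinite

namespace Oscillates

variable {X Y : Type*} {f : ℕ → X → Y} {V : Bool → Set Y} {x : X} {L L' : Set ℕ}

theorem of_diff_finite (h : Oscillates f V x L') (hfin : (L' \ L).Finite) :
    Oscillates f V x L :=
  fun b => ((h b).sdiff hfin).mono fun _ hn =>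
    ⟨not_not.1 fun hnL => hn.2 ⟨hn.1.1, hnL⟩, hn.1.2⟩

theorem mono (h : Oscillates f V x L) (hLL' : L ⊆ L') : Oscillates f V x L' :=
  h.of_diff_finite (by rw [sdiff_eq_bot_iff.2 hLL']; exact finite_empty)

end Oscillates

theorem StrictMono.infinite_sep_range_of_frequently {φ : ℕ → ℕ} (hφ : StrictMono φ)
    {p : ℕ → Prop} (h : ∃ᶠ n in atTop, p (φ n)) : {m ∈ range φ | p m}.Infinite :=
  ((Nat.frequently_atTop_iff_infinite.1 h).image hφ.injective.injOn).mono <| by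
    rintro _ ⟨n, hn, rfl⟩
    exact ⟨mem_range_self n, hn⟩

theorem IsCompact.exists_mapClusterPt_ne_of_not_cauchySeq {M : Type*} [UniformSpace M]
    {K : Set M} (hK : IsCompact K) {u : ℕ → M} (hu : ∀ n, u n ∈ K) (hnc : ¬ CauchySeq u) :
    ∃ a₀ a₁, a₀ ≠ a₁ ∧ MapClusterPt a₀ atTop u ∧ MapClusterPt a₁ atTop u := by
  obtain ⟨a₀, -, h₀⟩ :=
    hK.exists_mapClusterPt (f := atTop) (tendsto_principal.2 (Eventually.of_forall hu))
  by_contra! h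
  refine hnc (hK.tendsto_nhds_of_unique_mapClusterPt (y := a₀) (Eventually.of_forall hu)
    ?_).cauchySeq
  exact fun a _ ha => not_not.1 fun hne => h a₀ a (Ne.symm hne) h₀ ha

section CenteredBalls

variable {M : Type*} [MetricSpace M]

def centeredBalls (S : Set M) : Set (Set M) :=
  range fun p : S × ℕ => ball (p.1 : M) (1 / ((p.2 : ℝ) + 1))

theorem Set.Countable.centeredBalls {S : Set M} (hS : S.Countable) :
    (centeredBalls S).Countable :=
  have := hS.to_subtype
  countable_range _

theorem isOpen_of_mem_centeredBalls {S : Set M} {V : Set M} (hV : V ∈ centeredBalls S) :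
    IsOpen V := by
  obtain ⟨p, rfl⟩ := hV
  exact isOpen_ball

theorem exists_centeredBalls_disjoint_closure {S : Set M} {a : Bool → M}
    (ha : a false ≠ a true) (haS : ∀ b, a b ∈ closure S) :
    ∃ V : Bool → Set M, (∀ b, V b ∈ centeredBalls S) ∧
      Disjoint (closure (V false)) (closure (V true)) ∧ ∀ b, V b ∈ 𝓝 (a b) := by
  obtain ⟨k, hk⟩ := exists_nat_one_div_lt (div_pos (dist_pos.2 ha) four_pos)
  set ε : ℝ := 1 / ((k : ℝ) + 1)
  choose s hsS hs using fun b => Metric.mem_closure_iff.1 (haS b) ε (by positivity)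
  refine ⟨fun b => ball (s b) ε, fun b => ⟨(⟨s b, hsS b⟩, k), rfl⟩, ?_,
    fun b => isOpen_ball.mem_nhds (hs b)⟩
  · refine (closedBall_disjoint_closedBall ?_).mono closure_ball_subset_closedBall
      closure_ball_subset_closedBall
    have := dist_triangle4 (a false) (s false) (s true) (a true)
    rw [dist_comm (s true)] at this
    linarith [hs false, hs true]

theorem exists_centeredBalls_frequently_of_not_cauchySeq {S K : Set M} (hK : IsCompact K)
    {u : ℕ → M} (huK : ∀ n, u n ∈ K) (huS : ∀ n, u n ∈ closure S) (hnc : ¬ CauchySeq u) :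
    ∃ V : Bool → Set M, (∀ b, V b ∈ centeredBalls S) ∧
      Disjoint (closure (V false)) (closure (V true)) ∧ ∀ b, ∃ᶠ n in atTop, u n ∈ V b := by
  obtain ⟨a₀, a₁, hne, h₀, h₁⟩ := hK.exists_mapClusterPt_ne_of_not_cauchySeq huK hnc
  have hcl : ∀ {a}, MapClusterPt a atTop u → a ∈ closure S := fun ha =>
    closure_minimal (range_subset_iff.2 huS) isClosed_closure
      (closure_mono (image_subset_range _ _) (mapClusterPt_atTop_iff_forall_mem_closure.1 ha 0))
  obtain ⟨V, hV, hdisj, hnhds⟩ :=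
    exists_centeredBalls_disjoint_closure (a := fun b => cond b a₁ a₀) hne
      (Bool.forall_bool.2 ⟨hcl h₀, hcl h₁⟩)
  refine ⟨V, hV, hdisj, Bool.forall_bool.2 ⟨?_, ?_⟩⟩
  · exact mapClusterPt_iff_frequently.1 h₀ _ (hnhds false)
  · exact mapClusterPt_iff_frequently.1 h₁ _ (hnhds true)

theorem exists_strictMono_cauchySeq_of_not_oscillates {X : Type*} {f : ℕ → X → M}
    (hcomp : IsCompact (closure (range f))) {S : Set M} (hS : ∀ n x, f n x ∈ closure S)
    {D : Set ℕ} (hD : D.Infinite)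
    (h : ∀ V : Bool → Set M, (∀ b, V b ∈ centeredBalls S) →
      Disjoint (closure (V false)) (closure (V true)) → ∀ x, ¬ Oscillates f V x D) :
    ∃ φ : ℕ → ℕ, StrictMono φ ∧ ∀ x, CauchySeq fun n => f (φ n) x := by
  have hφ := Nat.nth_strictMono (p := (· ∈ D)) hD
  refine ⟨Nat.nth (· ∈ D), hφ, fun x => by_contra fun hnc => ?_⟩
  obtain ⟨V, hV, hdisj, hfreq⟩ := exists_centeredBalls_frequently_of_not_cauchySeq
    (u := fun n => f (Nat.nth (· ∈ D) n) x) (hcomp.image (continuous_apply x))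
    (fun n => ⟨_, subset_closure (mem_range_self _), rfl⟩) (fun n => hS _ x) hnc
  refine h V hV hdisj x fun b =>
    (hφ.infinite_sep_range_of_frequently (p := (f · x ∈ V b)) (hfreq b)).mono ?_
  rintro m ⟨hm, hmV⟩
  rw [Nat.range_nth_of_infinite (p := (· ∈ D)) hD] at hm
  exact ⟨hm, hmV⟩

end CenteredBalls

theorem exists_infinite_subset_forall_exists_subset {ι α : Type*} [Finite ι] {U : ι → Set α}
    {A : ι → α → Set ℕ} {D : Set ℕ} (hD : D.Infinite)
    (h : ∀ i, ∀ L ⊆ D, L.Infinite → ∃ a ∈ U i, (L ∩ A i a).Infinite) :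
    ∃ L ⊆ D, L.Infinite ∧ ∀ i, ∃ a ∈ U i, L ⊆ A i a := by
  classical
  have := Fintype.ofFinite ι
  suffices ∀ s : Finset ι, ∃ L ⊆ D, L.Infinite ∧ ∀ i ∈ s, ∃ a ∈ U i, L ⊆ A i a by
    simpa using this Finset.univ
  intro s
  induction s using Finset.induction_on with
  | empty => exact ⟨D, subset_rfl, hD, by simp⟩
  | insert j s _ ih =>
    obtain ⟨L, hLD, hL, hs⟩ := ih
    obtain ⟨a, ha, hinf⟩ := h j L hLD hL
    refine ⟨L ∩ A j a, inter_subset_left.trans hLD, hinf, fun i hi => ?_⟩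
    rcases Finset.mem_insert.1 hi with rfl | hi
    · exact ⟨a, ha, inter_subset_right⟩
    · obtain ⟨a', ha', hLA⟩ := hs i hi
      exact ⟨a', ha', inter_subset_left.trans hLA⟩

theorem exists_forall_mem_closedBall_of_subset_succ {X : Type*} [MetricSpace X]
    [CompleteSpace X]
    {c : ℕ → X} {r : ℕ → ℝ} (hr : ∀ n, 0 ≤ r n ∧ r n ≤ (1 / 2) ^ n)
    (hanti : ∀ n, closedBall (c (n + 1)) (r (n + 1)) ⊆ closedBall (c n) (r n)) :
    ∃ x, ∀ n, x ∈ closedBall (c n) (r n) := by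
  have hmono : Antitone fun n => closedBall (c n) (r n) := antitone_nat_of_succ_le hanti
  have hc : CauchySeq c := cauchySeq_of_le_geometric (1 / 2) 1 (by norm_num) fun n => by
    rw [one_mul, dist_comm]
    exact (hanti n (mem_closedBall_self (hr (n + 1)).1)).trans (hr n).2
  obtain ⟨x, hx⟩ := cauchySeq_tendsto_of_complete hc
  exact ⟨x, fun n => isClosed_closedBall.mem_of_tendsto hx
    (eventually_atTop.2 ⟨n, fun m hm => hmono hm (mem_closedBall_self (hr m).1)⟩)⟩

theorem exists_closedBall_subset_mapsTo {X Y : Type*} [PseudoMetricSpace X]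
    [TopologicalSpace Y] {g : X → Y} (hg : Continuous g) {z w : X} {r : ℝ} (hw : w ∈ ball z r)
    {V : Set Y} (hV : IsOpen V) (hgw : g w ∈ V) {δ : ℝ} (hδ : 0 < δ) :
    ∃ ρ, 0 < ρ ∧ ρ ≤ δ ∧ closedBall w ρ ⊆ closedBall z r ∧ MapsTo g (closedBall w ρ) V := by
  obtain ⟨ρ, hρ, hsub⟩ := nhds_basis_closedBall.mem_iff.1
    (inter_mem (isOpen_ball.mem_nhds hw) ((hV.preimage hg).mem_nhds hgw))
  have hsub' := (closedBall_subset_closedBall (min_le_left ρ δ)).trans hsub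
  exact ⟨min ρ δ, lt_min hρ hδ, min_le_right _ _,
    fun y hy => ball_subset_closedBall (hsub' hy).1, fun y hy => (hsub' hy).2⟩

/-- Level `n` of a Cantor scheme of closed balls in `X`, indexed by `Fin n → Bool`; `k` is the
index of the function `f k` that the balls of this level control. -/
structure BallScheme (X : Type*) (n : ℕ) where
  k : ℕ
  center : (Fin n → Bool) → X
  radius : (Fin n → Bool) → ℝ

namespace BallScheme

variable {X Y : Type*} [MetricSpace X] [TopologicalSpace Y] {n : ℕ}

def IsAdmissible (P : Set X) (s : BallScheme X n) : Prop :=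
  ∀ σ, s.center σ ∈ P ∧ 0 < s.radius σ ∧ s.radius σ ≤ (1 / 2) ^ n

def Refines (f : ℕ → X → Y) (V : Bool → Set Y) (s : BallScheme X n)
    (s' : BallScheme X (n + 1)) : Prop :=
  s.k < s'.k ∧ ∀ σ : Fin (n + 1) → Bool,
    closedBall (s'.center σ) (s'.radius σ) ⊆
      closedBall (s.center (Fin.init σ)) (s.radius (Fin.init σ)) ∧
    MapsTo (f s'.k) (closedBall (s'.center σ) (s'.radius σ)) (V (σ (Fin.last n)))

theorem exists_refines {f : ℕ → X → Y} (hf : ∀ n, Continuous (f n)) {V : Bool → Set Y}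
    (hV : ∀ b, IsOpen (V b)) {D : Set ℕ} (hD : D.Infinite) {P : Set X}
    (hP : ∀ z ∈ P, ∀ W ∈ 𝓝 z, ∀ L ⊆ D, L.Infinite → ∀ b,
      ∃ x ∈ W ∩ P, {n ∈ L | f n x ∈ V b}.Infinite)
    {s : BallScheme X n} (hs : s.IsAdmissible P) :
    ∃ s' : BallScheme X (n + 1), s'.IsAdmissible P ∧ s.Refines f V s' := by
  obtain ⟨L, -, hL, hw⟩ := exists_infinite_subset_forall_exists_subset
    (U := fun σ : Fin (n + 1) → Bool =>
      ball (s.center (Fin.init σ)) (s.radius (Fin.init σ)) ∩ P)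
    (A := fun σ w => {m | f m w ∈ V (σ (Fin.last n))}) hD
    fun σ L hLD hL => hP _ (hs _).1 _ (ball_mem_nhds _ (hs _).2.1) L hLD hL _
  choose w hwU hwV using hw
  obtain ⟨k, hkL, hk⟩ := hL.exists_gt s.k
  choose ρ hρ hρn hρsub hρV using fun σ =>
    exists_closedBall_subset_mapsTo (hf k) (hwU σ).1 (hV _) (hwV σ hkL)
      (by positivity : (0 : ℝ) < (1 / 2) ^ (n + 1))
  exact ⟨⟨k, w, ρ⟩, fun σ => ⟨(hwU σ).2, hρ σ, hρn σ⟩, hk, fun σ => ⟨hρsub σ, hρV σ⟩⟩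

end BallScheme

theorem exists_strictMono_forall_exists_forall_mem {X Y : Type*} [MetricSpace X]
    [CompleteSpace X] [TopologicalSpace Y] {f : ℕ → X → Y} (hf : ∀ n, Continuous (f n))
    {V : Bool → Set Y} (hV : ∀ b, IsOpen (V b)) {D : Set ℕ} (hD : D.Infinite) {P : Set X}
    (hPne : P.Nonempty)
    (hP : ∀ z ∈ P, ∀ W ∈ 𝓝 z, ∀ L ⊆ D, L.Infinite → ∀ b,
      ∃ x ∈ W ∩ P, {n ∈ L | f n x ∈ V b}.Infinite) :
    ∃ φ : ℕ → ℕ, StrictMono φ ∧ ∀ β : ℕ → Bool, ∃ x, ∀ n, f (φ n) x ∈ V (β n) := by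
  obtain ⟨z, hz⟩ := hPne
  choose next hnext using fun n (s : {s : BallScheme X n // s.IsAdmissible P}) =>
    BallScheme.exists_refines hf hV hD hP s.2
  let T : (n : ℕ) → {s : BallScheme X n // s.IsAdmissible P} := fun n =>
    Nat.rec ⟨⟨0, fun _ => z, fun _ => 1⟩, fun _ => ⟨hz, one_pos, by simp⟩⟩
      (fun n s => ⟨next n s, (hnext n s).1⟩) n
  refine ⟨fun n => (T (n + 1)).1.k, strictMono_nat_of_lt_succ fun n => (hnext (n + 1) _).2.1,
    fun β => ?_⟩
  obtain ⟨x, hx⟩ := exists_forall_mem_closedBall_of_subset_succ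
    (c := fun n => (T n).1.center fun i => β i) (r := fun n => (T n).1.radius fun i => β i)
    (fun n => ⟨((T n).2 _).2.1.le, ((T n).2 _).2.2⟩) fun n => ((hnext n (T n)).2.2 _).1
  exact ⟨x, fun n => ((hnext n (T n)).2.2 fun i => β i).2 (hx (n + 1))⟩

theorem nonempty_homeomorph_stoneCech_of_disjoint_closure {α Y : Type*} [TopologicalSpace α]
    [DiscreteTopology α] [TopologicalSpace Y] [CompactSpace Y] [T2Space Y] {g : α → Y}
    (hg : DenseRange g) (hsep : ∀ A : Set α, Disjoint (closure (g '' A)) (closure (g '' Aᶜ))) :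
    Nonempty (Y ≃ₜ StoneCech α) := by
  have hgc : Continuous g := continuous_of_discreteTopology
  set e := stoneCechExtend hgc
  have he : Continuous e := continuous_stoneCechExtend hgc
  have himage : ∀ A : Set α, e '' closure (stoneCechUnit '' A) ⊆ closure (g '' A) := fun A =>
    (image_closure_subset_closure_image he).trans <| by
      rw [image_image, funext (stoneCechExtend_stoneCechUnit hgc)]
  have hinj : Function.Injective e := by
    intro x y hxy
    by_contra hne
    obtain ⟨U, W, hU, hW, hxU, hyW, hUW⟩ := t2_separation hne
    have hx := denseRange_stoneCechUnit.subset_closure_image_preimage_of_isOpen hU hxU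
    have hy := denseRange_stoneCechUnit.subset_closure_image_preimage_of_isOpen hW hyW
    have hWU : stoneCechUnit ⁻¹' W ⊆ (stoneCechUnit ⁻¹' U)ᶜ := fun a ha haU =>
      hUW.notMem_of_mem_left haU ha
    have hy' := closure_mono (image_mono hWU) hy
    exact (hsep _).ne_of_mem (himage _ (mem_image_of_mem e hx))
      (himage _ (mem_image_of_mem e hy')) hxy
  have hsurj : Function.Surjective e := by
    refine range_eq_univ.1 (eq_univ_of_univ_subset ?_)
    rw [← hg.closure_range]
    refine closure_minimal ?_ (isCompact_range he).isClosed
    rintro _ ⟨a, rfl⟩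
    exact ⟨stoneCechUnit a, stoneCechExtend_stoneCechUnit hgc a⟩
  exact ⟨(he.homeoOfEquivCompactToT2 (f := Equiv.ofBijective e ⟨hinj, hsurj⟩)).symm⟩

theorem nonempty_homeomorph_stoneCech_of_forall_exists_forall_mem {X M : Type*}
    [TopologicalSpace M] [T2Space M] {g : ℕ → X → M} (hcomp : IsCompact (closure (range g)))
    {V : Bool → Set M} (hdisj : Disjoint (closure (V false)) (closure (V true)))
    (hpat : ∀ β : ℕ → Bool, ∃ x, ∀ n, g n x ∈ V (β n)) :
    Nonempty (closure (range g) ≃ₜ StoneCech ℕ) := by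
  have := isCompact_iff_compactSpace.1 hcomp
  let g' : ℕ → closure (range g) := fun n => ⟨g n, subset_closure (mem_range_self n)⟩
  refine nonempty_homeomorph_stoneCech_of_disjoint_closure (g := g')
    (Subtype.dense_iff.2 (by rw [← range_comp]; exact subset_rfl)) fun A => ?_
  classical
  obtain ⟨x, hx⟩ := hpat fun n => decide (n ∉ A)
  let ev : closure (range g) → M := fun h => (h : X → M) x
  have hev : Continuous ev := (continuous_apply x).comp continuous_subtype_val
  have hcl : ∀ (B : Set ℕ) (b : Bool), (∀ n ∈ B, g n x ∈ V b) →
      closure (g' '' B) ⊆ ev ⁻¹' closure (V b) := fun B b hB =>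
    closure_minimal (by rintro _ ⟨n, hn, rfl⟩; exact subset_closure (hB n hn))
      (isClosed_closure.preimage hev)
  exact (hdisj.preimage ev).mono (hcl A false fun n hn => by simpa [hn] using hx n)
    (hcl Aᶜ true fun n hn => by simpa [show n ∉ A from hn] using hx n)

theorem exists_strictMono_nonempty_homeomorph_stoneCech_of_oscillates {X M : Type*}
    [MetricSpace X] [CompleteSpace X] [TopologicalSpace M] [T2Space M] {f : ℕ → X → M}
    (hf : ∀ n, Continuous (f n)) (hcomp : IsCompact (closure (range f))) {V : Bool → Set M}
    (hV : ∀ b, IsOpen (V b)) (hdisj : Disjoint (closure (V false)) (closure (V true)))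
    {D : Set ℕ} (hD : D.Infinite) {x₀ : X} (hx₀ : Oscillates f V x₀ D)
    (hher : ∀ z, Oscillates f V z D → ∀ W ∈ 𝓝 z, ∀ L ⊆ D, L.Infinite →
      ∃ x ∈ W, Oscillates f V x L) :
    ∃ φ : ℕ → ℕ, StrictMono φ ∧ Nonempty (closure (range (f ∘ φ)) ≃ₜ StoneCech ℕ) := by
  obtain ⟨φ, hφ, hpat⟩ := exists_strictMono_forall_exists_forall_mem hf hV hD
    (P := {x | Oscillates f V x D}) ⟨x₀, hx₀⟩ fun z hz W hW L hLD hL b =>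
      let ⟨x, hxW, hx⟩ := hher z hz W hW L hLD hL
      ⟨x, ⟨hxW, hx.mono hLD⟩, hx b⟩
  have hcompφ : IsCompact (closure (range (f ∘ φ))) :=
    hcomp.of_isClosed_subset isClosed_closure (closure_mono (range_comp_subset_range φ f))
  exact ⟨φ, hφ, nonempty_homeomorph_stoneCech_of_forall_exists_forall_mem hcompφ hdisj hpat⟩

/-- **Rosenthal's dichotomy for metric-valued functions.**
Let `X` be a Polish space, `(M, d)` a metric space, and `(fₙ)` a sequence in `C(X, M)` such that
the closure of `{fₙ : n ∈ ω}` in `M^X` is compact.  Then either `(fₙ)` contains a pointwise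
Cauchy subsequence, or `(fₙ)` contains a subsequence whose closure in `M^X` is homeomorphic
to `βω`. -/
theorem rosenthal_dichotomy_metric
    {X M : Type*} [TopologicalSpace X] [PolishSpace X] [MetricSpace M]
    (f : ℕ → X → M) (hf : ∀ n, Continuous (f n))
    (hcomp : IsCompact (closure (Set.range f))) :
    (∃ φ : ℕ → ℕ, StrictMono φ ∧ ∀ x : X, CauchySeq (fun n => f (φ n) x)) ∨
    (∃ φ : ℕ → ℕ, StrictMono φ ∧
      Nonempty (↥(closure (Set.range (f ∘ φ))) ≃ₜ StoneCech ℕ)) := by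
  let := TopologicalSpace.upgradeIsCompletelyMetrizable X
  obtain ⟨S, hSc, hS⟩ := TopologicalSpace.isSeparable_iUnion.2 fun n =>
    TopologicalSpace.isSeparable_range (hf n)
  have := hSc.centeredBalls.to_subtype
  obtain ⟨D, hD, hher⟩ := exists_infinite_forall_exists_mem_nhds
    (fun V : Bool → centeredBalls S => Oscillates f fun b => V b)
    fun _ _ _ _ h => h.of_diff_finite
  by_cases h : ∃ V : Bool → centeredBalls S,
      Disjoint (closure (V false : Set M)) (closure (V true)) ∧ ∃ x, Oscillates f (V ·) x D
  · obtain ⟨V, hdisj, x₀, hx₀⟩ := h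
    exact .inr <| exists_strictMono_nonempty_homeomorph_stoneCech_of_oscillates hf hcomp
      (fun b => isOpen_of_mem_centeredBalls (V b).2) hdisj hD hx₀ (hher V)
  · push Not at h
    exact .inl <| exists_strictMono_cauchySeq_of_not_oscillates hcomp
      (fun n x => hS (mem_iUnion_of_mem n (mem_range_self x))) hD
      fun V hV hdisj => h (fun b => ⟨V b, hV b⟩) hdisj
end

section
/- Let X be a topological space, (M,d) a metric space, and let G be a subset of C(X,M) such that the closure of G in M^X is compact. Define an equivalence relation on X by x ∼ y if and only if g(x) = g(y) for all g ∈ G, let p : X → X̃ = X/∼ be the quotient map, for each g ∈ G let g̃ : X̃ → M be the induced map with g̃ ∘ p = g, and let X_G denote X̃ endowed with the initial topology generated by G̃ = { g̃ : g ∈ G }. Then the map p* : M^{X_G} → M^X defined by p*(h) = h ∘ p restricts to a homeomorphism of the closure of G̃ in M^{X_G} onto the closure of G in M^X. -/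
open Topology Set

/-! Precomposition with the surjection `p` is an embedding `M^X̃ → M^X` whose range consists of
the functions constant on the fibres of `p`. These form a closed set containing `G`, hence
`closure G`, and an embedding is a homeomorphism from the preimage of any subset of its range onto
that subset; the preimage of `closure G` is `closure G̃` because `G̃` is the preimage of `G`. -/

section FactorsThrough

variable {X Y M : Type*}

theorem Function.Surjective.range_comp_right {p : X → Y} (hp : p.Surjective) :
    range (fun h : Y → M => h ∘ p) = {u | u.FactorsThrough p} := by
  refine Subset.antisymm ?_ fun u hu => ⟨u ∘ p.surjInv hp, ?_⟩
  · rintro _ ⟨h, rfl⟩ a b hab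
    simp only [Function.comp_apply, hab]
  · funext x
    exact hu (Function.surjInv_eq hp (p x))

theorem isClosed_setOf_factorsThrough [TopologicalSpace M] [T2Space M] (p : X → Y) :
    IsClosed {u : X → M | u.FactorsThrough p} := by
  simp only [Function.FactorsThrough, ofPred_forall]
  exact isClosed_iInter fun a => isClosed_iInter fun b => isClosed_iInter fun _ =>
    isClosed_eq (continuous_apply a) (continuous_apply b)

end FactorsThrough

theorem quotient_closure_homeomorph_general
    {X M : Type*} [MetricSpace M]
    (G : Set (X → M))
    (XT : Type*) (p : X → XT) (hp : Function.Surjective p)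
    (hker : ∀ x y : X, p x = p y ↔ ∀ g ∈ G, g x = g y) :
    letI : TopologicalSpace XT := TopologicalSpace.induced
      (fun xt => fun h : {h : XT → M | h ∘ p ∈ G} => h.1 xt) inferInstance
    ∃ e : ↥(closure {h : XT → M | h ∘ p ∈ G}) ≃ₜ ↥(closure G),
      ∀ h : ↥(closure {h : XT → M | h ∘ p ∈ G}), (e h : X → M) = h.1 ∘ p := by
  have hemb : IsEmbedding fun h : XT → M => h ∘ p := hp.isEmbedding_comp
  have hrange : closure G ⊆ range fun h : XT → M => h ∘ p := by
    rw [hp.range_comp_right]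
    exact closure_minimal (fun g hg a b hab => (hker a b).1 hab g hg)
      (isClosed_setOf_factorsThrough p)
  have hclosure : closure ((· ∘ p) ⁻¹' G) = (· ∘ p) ⁻¹' closure G := by
    rw [hemb.closure_eq_preimage_closure_image, image_preimage_eq_of_subset
      (subset_closure.trans hrange)]
  exact ⟨(Homeomorph.setCongr hclosure).trans (hemb.homeomorphOfSubsetRange hrange),
    fun _ => rfl⟩

/-- Let `X` be a topological space, `(M, d)` a metric space, and `G ⊆ C(X, M)` with compact
closure in `M^X`.  Let `p : X → X̃` be the quotient map of the equivalence relation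
`x ∼ y ↔ ∀ g ∈ G, g x = g y` (presented here as a surjection `p` whose fibers are exactly the
equivalence classes), so that the induced maps `g̃` (`g̃ ∘ p = g`, `g ∈ G`) form the set
`G̃ = {h : X̃ → M | h ∘ p ∈ G}`, and endow `X̃` with the initial topology `X_G` generated
by `G̃`.  Then `p* : M^{X_G} → M^X`, `p*(h) = h ∘ p`, restricts to a homeomorphism of the
closure of `G̃` in `M^{X_G}` onto the closure of `G` in `M^X`. -/
theorem quotient_closure_homeomorph
    {X M : Type*} [TopologicalSpace X] [MetricSpace M]
    (G : Set (X → M)) (hGcont : ∀ g ∈ G, Continuous g)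
    (hGcomp : IsCompact (closure G))
    (XT : Type*) (p : X → XT) (hp : Function.Surjective p)
    (hker : ∀ x y : X, p x = p y ↔ ∀ g ∈ G, g x = g y) :
    letI : TopologicalSpace XT := TopologicalSpace.induced
      (fun xt => fun h : {h : XT → M | h ∘ p ∈ G} => h.1 xt) inferInstance
    ∃ e : ↥(closure {h : XT → M | h ∘ p ∈ G}) ≃ₜ ↥(closure G),
      ∀ h : ↥(closure {h : XT → M | h ∘ p ∈ G}), (e h : X → M) = h.1 ∘ p :=
  quotient_closure_homeomorph_general G XT p hp hker
end
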